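/- arXiv:2507.17487 — 8 statements merged into one kernel-verified Lean document; each statement's English description precedes it below -/
import Mathlib

section
/- Let α be a type of ground atoms, let A be a finite set of atoms, and let R be a set of full ground rules over α each of whose bodies is nonempty. Then the set of optimal censors for A and R is nonempty, and the intersection of all optimal censors for A and R is itself a censor for A and R (it is a subset of A and satisfies R). -/
/-- A ground rule: a finite body and a family of finite head images. -/
structure GroundRule (α : Type*) where
  body : Finset α
  heads : Set (Finset α)

/-- A set of atoms `C` satisfies a ground rule `(B, Q)` if `B ⊆ C` implies
that `I ⊆ C` for some `I ∈ Q`. -/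
def RuleSat {α : Type*} (C : Set α) (r : GroundRule α) : Prop :=
  ↑r.body ⊆ C → ∃ I ∈ r.heads, ↑I ⊆ C

/-- `C` satisfies a set of ground rules if it satisfies every rule in it. -/
def SatisfiesSet {α : Type*} (C : Set α) (R : Set (GroundRule α)) : Prop :=
  ∀ r ∈ R, RuleSat C r

/-- A censor for an ambient set `A` and rules `R` is a subset of `A` satisfying `R`. -/
def Censor {α : Type*} (A : Set α) (R : Set (GroundRule α)) (C : Set α) : Prop :=
  C ⊆ A ∧ SatisfiesSet C R

/-- An optimal censor is a censor that is maximal w.r.t. set inclusion. -/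
def OptimalCensor {α : Type*} (A : Set α) (R : Set (GroundRule α)) (C : Set α) : Prop :=
  Censor A R C ∧ ∀ C', Censor A R C' → C ⊆ C' → C' = C

/-!
Models of full rules are closed under nonempty intersections: if the body of a full rule lies in
every member of the family, each member contains the rule's unique head image, so the
intersection does too. Censors are therefore closed under nonempty intersections, and it only
remains to see that an optimal censor exists. Since bodies are nonempty, `∅` is a censor, and as
`A` is finite it extends to a maximal one.
-/

section

variable {α : Type*}

theorem RuleSat.sInter {r : GroundRule α} (hfull : r.heads.Subsingleton) {S : Set (Set α)}
    (hS : S.Nonempty) (hsat : ∀ C ∈ S, RuleSat C r) : RuleSat (⋂₀ S) r := by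
  intro hbody
  obtain ⟨C₀, hC₀⟩ := hS
  obtain ⟨I, hI, -⟩ := hsat C₀ hC₀ (hbody.trans (Set.sInter_subset_of_mem hC₀))
  refine ⟨I, hI, Set.subset_sInter fun C hC => ?_⟩
  obtain ⟨J, hJ, hJC⟩ := hsat C hC (hbody.trans (Set.sInter_subset_of_mem hC))
  rwa [hfull hJ hI] at hJC

theorem SatisfiesSet.sInter {R : Set (GroundRule α)} (hfull : ∀ r ∈ R, r.heads.Subsingleton)
    {S : Set (Set α)} (hS : S.Nonempty) (hsat : ∀ C ∈ S, SatisfiesSet C R) :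
    SatisfiesSet (⋂₀ S) R :=
  fun r hr => RuleSat.sInter (hfull r hr) hS fun C hC => hsat C hC r hr

theorem Censor.sInter {A : Set α} {R : Set (GroundRule α)}
    (hfull : ∀ r ∈ R, r.heads.Subsingleton) {S : Set (Set α)} (hS : S.Nonempty)
    (hcensor : ∀ C ∈ S, Censor A R C) : Censor A R (⋂₀ S) := by
  obtain ⟨C₀, hC₀⟩ := hS
  exact ⟨(Set.sInter_subset_of_mem hC₀).trans (hcensor C₀ hC₀).1,
    SatisfiesSet.sInter hfull ⟨C₀, hC₀⟩ fun C hC => (hcensor C hC).2⟩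

theorem censor_empty (A : Set α) {R : Set (GroundRule α)}
    (hbody : ∀ r ∈ R, r.body.Nonempty) : Censor A R ∅ := by
  refine ⟨Set.empty_subset A, fun r hr hsub => ?_⟩
  obtain ⟨x, hx⟩ := hbody r hr
  exact absurd (hsub hx) (Set.notMem_empty x)

theorem optimalCensor_iff_maximal {A : Set α} {R : Set (GroundRule α)} {C : Set α} :
    OptimalCensor A R C ↔ Maximal (Censor A R) C := by
  refine and_congr_right fun _ => forall₂_congr fun C' _ => ?_
  exact ⟨fun h hle => (h hle).le, fun h hle => (h hle).antisymm hle⟩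

theorem Censor.exists_optimalCensor_superset {A : Set α} (hA : A.Finite)
    {R : Set (GroundRule α)} {C : Set α} (hC : Censor A R C) :
    ∃ D, C ⊆ D ∧ OptimalCensor A R D := by
  have hfin : {C | Censor A R C}.Finite :=
    hA.finite_subsets.subset fun _ hC => hC.1
  obtain ⟨D, hCD, hD⟩ := hfin.exists_le_maximal hC
  exact ⟨D, hCD, optimalCensor_iff_maximal.2 hD⟩

end

/-- for a finite ambient set and full rules with nonempty bodies,
optimal censors exist and their intersection is a censor. -/
theorem stmt1 {α : Type*} (A : Finset α) (R : Set (GroundRule α))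
    (hfull : ∀ r ∈ R, r.heads.Subsingleton)
    (hbody : ∀ r ∈ R, r.body.Nonempty) :
    (∃ C, OptimalCensor (↑A) R C) ∧
      Censor (↑A) R (⋂₀ {C | OptimalCensor (↑A) R C}) := by
  obtain ⟨C, -, hC⟩ := (censor_empty (↑A) hbody).exists_optimalCensor_superset A.finite_toSet
  exact ⟨⟨C, hC⟩, Censor.sInter hfull ⟨C, hC⟩ fun _ hD => hD.1⟩
end

section
/- Let α be a type of ground atoms, let A be a set of atoms, and let R be a set of linear ground rules over α. Then the union U of all censors for A and R is itself a censor for A and R; consequently U is the unique optimal censor for A and R, it contains every censor, and the intersection of all optimal censors equals U and is a censor. -/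
/-! A rule with a singleton body `{a}` is triggered in a union of sets only if it is triggered
in one of them, namely one containing `a`; its head image there then lies in the union too.
So satisfaction of linear rules, and hence being a censor, is preserved by arbitrary unions,
and the union of all censors is the greatest censor, which is then the only maximal one. -/

section

variable {α : Type*}

theorem RuleSat.sUnion {r : GroundRule α} {a : α} (hr : r.body = {a}) {S : Set (Set α)}
    (hS : ∀ C ∈ S, RuleSat C r) : RuleSat (⋃₀ S) r := by
  intro hbody
  obtain ⟨C, hCS, haC⟩ : a ∈ ⋃₀ S := hbody (by simp [hr])
  obtain ⟨I, hI, hIC⟩ := hS C hCS (by simpa [hr] using haC)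
  exact ⟨I, hI, hIC.trans (Set.subset_sUnion_of_mem hCS)⟩

theorem SatisfiesSet.sUnion {R : Set (GroundRule α)} (hlin : ∀ r ∈ R, ∃ a, r.body = {a})
    {S : Set (Set α)} (hS : ∀ C ∈ S, SatisfiesSet C R) : SatisfiesSet (⋃₀ S) R := fun r hr =>
  let ⟨_, ha⟩ := hlin r hr
  RuleSat.sUnion ha fun C hC => hS C hC r hr

theorem isGreatest_sUnion_censors {A : Set α} {R : Set (GroundRule α)}
    (hlin : ∀ r ∈ R, ∃ a, r.body = {a}) :
    IsGreatest {C | Censor A R C} (⋃₀ {C | Censor A R C}) :=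
  ⟨⟨Set.sUnion_subset fun _ hC => hC.1, SatisfiesSet.sUnion hlin fun _ hC => hC.2⟩,
    fun _ hC => Set.subset_sUnion_of_mem hC⟩

theorem optimalCensor_iff_eq_of_isGreatest {A : Set α} {R : Set (GroundRule α)} {U : Set α}
    (hU : IsGreatest {C | Censor A R C} U) {C : Set α} : OptimalCensor A R C ↔ C = U := by
  constructor
  · intro hC
    exact (hC.2 U hU.1 (hU.2 hC.1)).symm
  · rintro rfl
    exact ⟨hU.1, fun C' hC' hCC' => (hU.2 hC').antisymm hCC'⟩

end

/-- for linear rules, the union of all censors is a censor,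
it is the unique optimal censor, contains every censor, and the intersection
of all optimal censors equals it and is a censor. -/
theorem stmt2 {α : Type*} (A : Set α) (R : Set (GroundRule α))
    (hlin : ∀ r ∈ R, ∃ a, r.body = {a}) :
    Censor A R (⋃₀ {C | Censor A R C}) ∧
    OptimalCensor A R (⋃₀ {C | Censor A R C}) ∧
    (∀ C, OptimalCensor A R C → C = ⋃₀ {C | Censor A R C}) ∧
    (∀ C, Censor A R C → C ⊆ ⋃₀ {C | Censor A R C}) ∧
    ⋂₀ {C | OptimalCensor A R C} = ⋃₀ {C | Censor A R C} ∧
    Censor A R (⋂₀ {C | OptimalCensor A R C}) := by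
  have hU := isGreatest_sUnion_censors (A := A) hlin
  have hopt : {C | OptimalCensor A R C} = {⋃₀ {C | Censor A R C}} :=
    Set.ext fun _ => optimalCensor_iff_eq_of_isGreatest hU
  have hinter : ⋂₀ {C | OptimalCensor A R C} = ⋃₀ {C | Censor A R C} := by
    rw [hopt, Set.sInter_singleton]
  exact ⟨hU.1, (optimalCensor_iff_eq_of_isGreatest hU).2 rfl,
    fun _ => (optimalCensor_iff_eq_of_isGreatest hU).1, hU.2, hinter, hinter ▸ hU.1⟩
end

section
/- There exists a set of ground rules R and an ambient finite set A of atoms such that the intersection of all optimal censors for A and R is not a censor. Concretely: let c0, b1, b2 be three distinct atoms, let A = {c0, b1, b2}, and let R consist of the denial rule ({b1, b2}, ∅) and the rule ({c0}, {{b1}, {b2}}). Then the optimal censors for A and R are exactly {c0, b1} and {c0, b2}, and their intersection {c0} does not satisfy R. -/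
theorem setOf_maximal_eq_of_isAntichain_of_cofinal {β : Type*} [PartialOrder β] {P : β → Prop}
    {S : Set β} (hSP : ∀ y ∈ S, P y) (hanti : IsAntichain (· ≤ ·) S)
    (hcofinal : ∀ x, P x → ∃ y ∈ S, x ≤ y) : {x | Maximal P x} = S := by
  ext x
  constructor
  · rintro ⟨hx, hmax⟩
    obtain ⟨y, hyS, hxy⟩ := hcofinal x hx
    rwa [← le_antisymm hxy (hmax (hSP y hyS) hxy)] at hyS
  · intro hxS
    refine ⟨hSP x hxS, fun z hz hxz => ?_⟩
    obtain ⟨y, hyS, hzy⟩ := hcofinal z hz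
    have hxy : x = y := hanti.eq hxS hyS (hxz.trans hzy)
    exact hxy ▸ hzy

section Rules

variable {α : Type*}

theorem satisfiesSet_pair {C : Set α} {r s : GroundRule α} :
    SatisfiesSet C {r, s} ↔ RuleSat C r ∧ RuleSat C s := by
  simp [SatisfiesSet]

theorem ruleSat_mk_empty {C : Set α} {B : Finset α} : RuleSat C ⟨B, ∅⟩ ↔ ¬ ↑B ⊆ C := by
  simp [RuleSat]

theorem ruleSat_mk_pair {C : Set α} {B I J : Finset α} :
    RuleSat C ⟨B, {I, J}⟩ ↔ (↑B ⊆ C → ↑I ⊆ C ∨ ↑J ⊆ C) := by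
  simp [RuleSat]

end Rules

section Example3

variable {α : Type*} [DecidableEq α] {c0 b1 b2 : α}

/-- The grounding of the policy `{K(B(1) ∧ B(2)) → K⊥, ∀x (K C(x) → K ∃y B(y))}` on the ABox
`{C(0), B(1), B(2)}`, with `c0, b1, b2` standing for `C(0), B(1), B(2)`. -/
def example3Rules (c0 b1 b2 : α) : Set (GroundRule α) :=
  {⟨{b1, b2}, ∅⟩, ⟨{c0}, {{b1}, {b2}}⟩}

theorem satisfiesSet_example3Rules_iff {C : Set α} :
    SatisfiesSet C (example3Rules c0 b1 b2) ↔
      ¬(b1 ∈ C ∧ b2 ∈ C) ∧ (c0 ∈ C → b1 ∈ C ∨ b2 ∈ C) := by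
  simp [example3Rules, satisfiesSet_pair, ruleSat_mk_empty, ruleSat_mk_pair,
    Set.insert_subset_iff]

theorem censor_pair_example3Rules_left (h2 : c0 ≠ b2) (h3 : b1 ≠ b2) :
    Censor {c0, b1, b2} (example3Rules c0 b1 b2) {c0, b1} := by
  refine ⟨Set.insert_subset_insert (Set.singleton_subset_iff.2 (Set.mem_insert _ _)), ?_⟩
  simp [satisfiesSet_example3Rules_iff, h2.symm, h3.symm]

theorem censor_pair_example3Rules_right (h1 : c0 ≠ b1) (h3 : b1 ≠ b2) :
    Censor {c0, b1, b2} (example3Rules c0 b1 b2) {c0, b2} := by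
  refine ⟨Set.insert_subset_insert (Set.singleton_subset_iff.2 (Set.mem_insert_of_mem _ rfl)), ?_⟩
  simp [satisfiesSet_example3Rules_iff, h1.symm, h3]

theorem Censor.subset_pair_example3Rules {C : Set α}
    (hC : Censor {c0, b1, b2} (example3Rules c0 b1 b2) C) : C ⊆ {c0, b1} ∨ C ⊆ {c0, b2} := by
  obtain ⟨hCA, hCR⟩ := hC
  have hnot_both := (satisfiesSet_example3Rules_iff.1 hCR).1
  by_cases hb2 : b2 ∈ C
  · refine Or.inr fun x hx => ?_
    rcases hCA hx with rfl | rfl | rfl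
    exacts [Or.inl rfl, absurd ⟨hx, hb2⟩ hnot_both, Or.inr rfl]
  · refine Or.inl fun x hx => ?_
    rcases hCA hx with rfl | rfl | rfl
    exacts [Or.inl rfl, Or.inr rfl, absurd hx hb2]

theorem setOf_optimalCensor_example3Rules (h1 : c0 ≠ b1) (h2 : c0 ≠ b2) (h3 : b1 ≠ b2) :
    {C | OptimalCensor {c0, b1, b2} (example3Rules c0 b1 b2) C} = {{c0, b1}, {c0, b2}} := by
  simp_rw [optimalCensor_iff_maximal]
  refine setOf_maximal_eq_of_isAntichain_of_cofinal ?_ ?_ fun C hC => ?_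
  · rintro _ (rfl | rfl)
    exacts [censor_pair_example3Rules_left h2 h3, censor_pair_example3Rules_right h1 h3]
  · have hb1 : b1 ∉ ({c0, b2} : Set α) := by simp [h1.symm, h3]
    have hb2 : b2 ∉ ({c0, b1} : Set α) := by simp [h2.symm, h3.symm]
    refine isAntichain_insert.2 ⟨Set.subsingleton_singleton.isAntichain _, ?_⟩
    rintro _ rfl -
    exact ⟨fun h => hb1 (h (by simp)), fun h => hb2 (h (by simp))⟩
  · rcases hC.subset_pair_example3Rules with h | h
    exacts [⟨_, Or.inl rfl, h⟩, ⟨_, Or.inr rfl, h⟩]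

end Example3

/-- a concrete instance in which the intersection of all optimal
censors is not a censor (it does not satisfy the rules). -/
theorem stmt3 {α : Type*} [DecidableEq α] (c0 b1 b2 : α)
    (h1 : c0 ≠ b1) (h2 : c0 ≠ b2) (h3 : b1 ≠ b2) :
    let A : Set α := {c0, b1, b2}
    let R : Set (GroundRule α) :=
      {⟨{b1, b2}, ∅⟩, ⟨{c0}, {{b1}, {b2}}⟩}
    {C | OptimalCensor A R C} = {({c0, b1} : Set α), {c0, b2}} ∧
    ⋂₀ {C | OptimalCensor A R C} = {c0} ∧
    ¬ SatisfiesSet ({c0} : Set α) R := by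
  intro A R
  have hoptimal : {C | OptimalCensor A R C} = {({c0, b1} : Set α), {c0, b2}} :=
    setOf_optimalCensor_example3Rules h1 h2 h3
  refine ⟨hoptimal, ?_, ?_⟩
  · rw [hoptimal, Set.sInter_pair, ← Set.insert_inter_distrib,
      Set.singleton_inter_eq_empty.2 (Set.mem_singleton_iff.not.2 h3), insert_empty_eq]
  · rw [show R = example3Rules c0 b1 b2 from rfl, satisfiesSet_example3Rules_iff]
    simp [h1.symm, h2.symm]
end

section
/- Let α be a type of ground atoms, let A be a set of atoms, let R be a set of full ground rules over α each of whose head family Q is a singleton {H}, and for a set F of atoms let cl_R(F) be the least superset of F that is closed under R (i.e., the intersection of all supersets C of F such that B ⊆ C implies H ⊆ C for every rule (B, {H}) ∈ R). Then F is disclosable (there exists F' with F ⊆ F' ⊆ A and F' satisfies R) if and only if cl_R(F) ⊆ A. -/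
/-- The least superset of `F` closed under the (singleton-headed) rules of `R`. -/
def clR {α : Type*} (R : Set (GroundRule α)) (F : Set α) : Set α :=
  ⋂₀ {C | F ⊆ C ∧ ∀ r ∈ R, ↑r.body ⊆ C → ∀ H ∈ r.heads, ↑H ⊆ C}

/-! For singleton-headed rules, satisfying a rule and being closed under it coincide, and `clR R F`
is the least closed superset of `F`; so some `F'` with `F ⊆ F' ⊆ A` satisfies `R` iff the least
one does. -/

def IsClosedUnder {α : Type*} (R : Set (GroundRule α)) (C : Set α) : Prop :=
  ∀ r ∈ R, ↑r.body ⊆ C → ∀ H ∈ r.heads, ↑H ⊆ C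

section Closure

variable {α : Type*} {R : Set (GroundRule α)} {F C : Set α}

theorem subset_clR : F ⊆ clR R F :=
  fun _ hx _ hC => hC.1 hx

theorem clR_subset (hFC : F ⊆ C) (hC : IsClosedUnder R C) : clR R F ⊆ C :=
  Set.sInter_subset_of_mem ⟨hFC, hC⟩

theorem isClosedUnder_clR : IsClosedUnder R (clR R F) :=
  fun r hr hbody H hH _ hx _ hC => hC.2 r hr (hbody.trans (Set.sInter_subset_of_mem hC)) H hH hx

theorem SatisfiesSet.isClosedUnder (hsub : ∀ r ∈ R, r.heads.Subsingleton)
    (hsat : SatisfiesSet C R) : IsClosedUnder R C := by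
  intro r hr hbody H hH
  obtain ⟨I, hI, hIC⟩ := hsat r hr hbody
  rwa [hsub r hr hH hI]

theorem IsClosedUnder.satisfiesSet (hne : ∀ r ∈ R, r.heads.Nonempty)
    (hC : IsClosedUnder R C) : SatisfiesSet C R := by
  intro r hr hbody
  obtain ⟨H, hH⟩ := hne r hr
  exact ⟨H, hH, hC r hr hbody H hH⟩

end Closure

/-- for rules whose head family is a singleton, `F` is disclosable
iff its closure under the rules is contained in the ambient set `A`. -/
theorem stmt4 {α : Type*} (A F : Set α) (R : Set (GroundRule α))
    (hfull : ∀ r ∈ R, ∃ H, r.heads = {H}) :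
    (∃ F', F ⊆ F' ∧ F' ⊆ A ∧ SatisfiesSet F' R) ↔ clR R F ⊆ A := by
  have hsub : ∀ r ∈ R, r.heads.Subsingleton := fun r hr => by
    obtain ⟨H, hH⟩ := hfull r hr
    exact hH ▸ Set.subsingleton_singleton
  have hne : ∀ r ∈ R, r.heads.Nonempty := fun r hr => by
    obtain ⟨H, hH⟩ := hfull r hr
    exact hH ▸ Set.singleton_nonempty H
  constructor
  · rintro ⟨F', hFF', hF'A, hsat⟩
    exact (clR_subset hFF' (hsat.isClosedUnder hsub)).trans hF'A
  · intro hclA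
    exact ⟨clR R F, subset_clR, hclA, isClosedUnder_clR.satisfiesSet hne⟩
end

section
/- Let V be a type, let E be a relation on V that is acyclic (there is no v with Relation.TransGen E v v), and let s, t ∈ V. Define E' by E' x y ↔ E x y ∨ (x = t ∧ y = s). Then Relation.ReflTransGen E s t holds if and only if there exists v ∈ V with Relation.TransGen E' v v. -/
/-!
A path from `s` to `t` closes into a cycle with the new edge `t → s`. Conversely, a path in the
enlarged graph either avoids the new edge, and is then an old path, or it can be cut at its first
and last use of the new edge into an old path ending at `t` and an old path starting at `s`. A
cycle of the first kind is excluded by acyclicity; for one of the second kind the two pieces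
concatenate, from `s` around the cycle to `t`.
-/

namespace Relation

variable {α : Type*} {r : α → α → Prop} {s t : α}

theorem TransGen.of_adjoin_edge {a b : α}
    (h : TransGen (fun x y => r x y ∨ (x = t ∧ y = s)) a b) :
    TransGen r a b ∨ (ReflTransGen r a t ∧ ReflTransGen r s b) := by
  induction h with
  | single hab =>
    rcases hab with hab | ⟨rfl, rfl⟩
    · exact .inl (.single hab)
    · exact .inr ⟨.refl, .refl⟩
  | tail _ hbc ih =>
    rcases hbc with hbc | ⟨rfl, rfl⟩
    · rcases ih with hab | ⟨hat, hsb⟩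
      · exact .inl (hab.tail hbc)
      · exact .inr ⟨hat, hsb.tail hbc⟩
    · rcases ih with hab | ⟨hat, -⟩
      · exact .inr ⟨hab.to_reflTransGen, .refl⟩
      · exact .inr ⟨hat, .refl⟩

theorem ReflTransGen.of_transGen_adjoin_edge_self (hacyc : ∀ v, ¬ TransGen r v v) {v : α}
    (hv : TransGen (fun x y => r x y ∨ (x = t ∧ y = s)) v v) :
    ReflTransGen r s t := by
  rcases hv.of_adjoin_edge with hvv | ⟨hvt, hsv⟩
  · exact absurd hvv (hacyc v)
  · exact hsv.trans hvt

end Relation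

/-- in a DAG, there is a path from `s` to `t` iff adding the
edge `(t, s)` creates a directed cycle. -/
theorem stmt5 {V : Type*} (E : V → V → Prop)
    (hacyc : ∀ v, ¬ Relation.TransGen E v v) (s t : V) :
    Relation.ReflTransGen E s t ↔
      ∃ v, Relation.TransGen (fun x y => E x y ∨ (x = t ∧ y = s)) v v := by
  constructor
  · intro hst
    exact ⟨s, .tail' (Relation.ReflTransGen.mono (fun _ _ => Or.inl) _ _ hst) (.inr ⟨rfl, rfl⟩)⟩
  · rintro ⟨v, hv⟩
    exact Relation.ReflTransGen.of_transGen_adjoin_edge_self hacyc hv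
end

section
/- Let V be a finite type, let E be an acyclic relation on V (no v with Relation.TransGen E v v), and let s, t ∈ V. Define E' by E' x y ↔ E x y ∨ (x = t ∧ y = s). Take atoms to be pairs in V × V, let A = {(v, u) | E' u v} ∪ {(s, s)}, and let R be the linear ground rule set containing, for every (v, u) ∈ V × V, the rule with body {(v, u)} and images {{(u, w)} | w ∈ V}. Let C be the union of all censors for A and R (the unique optimal censor). Then there exists u ∈ V with (t, u) ∈ C if and only if Relation.ReflTransGen E s t. -/
open Relation

theorem Finite.wellFounded_of_not_transGen_self {V : Type*} [Finite V] {E : V → V → Prop}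
    (hacyc : ∀ v, ¬ TransGen E v v) : WellFounded E :=
  haveI : Std.Irrefl (TransGen E) := ⟨hacyc⟩
  Subrelation.wf TransGen.single (Finite.wellFounded_of_trans_of_irrefl (TransGen E))

section SuccessorRules

variable {V : Type*}

/-- The ground instances `reachableVia(v, u) → ∃ w, reachableVia(u, w)` of the linear ED. -/
def successorRules (V : Type*) : Set (GroundRule (V × V)) :=
  {r | ∃ v u : V, r = ⟨{(v, u)}, {I | ∃ w : V, I = {(u, w)}}⟩}

theorem satisfiesSet_successorRules_iff {C : Set (V × V)} :
    SatisfiesSet C (successorRules V) ↔ ∀ p ∈ C, ∃ w, (p.2, w) ∈ C := by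
  constructor
  · intro h p hp
    obtain ⟨I, ⟨w, rfl⟩, hI⟩ := h _ ⟨p.1, p.2, rfl⟩ (by simpa using hp)
    exact ⟨w, hI (by simp)⟩
  · rintro h r ⟨v, u, rfl⟩ hbody
    obtain ⟨w, hw⟩ := h (v, u) (hbody (by simp))
    exact ⟨{(u, w)}, ⟨w, rfl⟩, by simpa using hw⟩

theorem reflTransGen_of_mem_of_forall_exists_succ_mem [Finite V] {E : V → V → Prop}
    (hacyc : ∀ v, ¬ TransGen E v v) {s t u : V} {C : Set (V × V)}
    (hCA : C ⊆ {p | E p.2 p.1 ∨ (p.2 = t ∧ p.1 = s)} ∪ {(s, s)})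
    (hsucc : ∀ p ∈ C, ∃ w, (p.2, w) ∈ C) (htu : (t, u) ∈ C) : ReflTransGen E s t := by
  by_contra hst
  obtain ⟨m, ⟨⟨y, hmy⟩, hmt⟩, hmin⟩ :=
    (Finite.wellFounded_of_not_transGen_self hacyc).has_min
      {x | (∃ y, (x, y) ∈ C) ∧ ReflTransGen E x t} ⟨t, ⟨u, htu⟩, .refl⟩
  have hms : m ≠ s := fun h => hst (h ▸ hmt)
  have hym : E y m := by
    rcases hCA hmy with (h | ⟨-, h⟩) | h
    · exact h
    · exact absurd h hms
    · exact absurd (congrArg Prod.fst h) hms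
  obtain ⟨w, hyw⟩ := hsucc _ hmy
  exact hmin y ⟨⟨w, hyw⟩, hmt.head hym⟩ hym

/-- The pairs `(v, u)` along the cycle `s →* u → v →* t → s`, where the last edge is the
added one. -/
def cycleCensor (E : V → V → Prop) (s t : V) : Set (V × V) :=
  {p | (E p.2 p.1 ∨ (p.2 = t ∧ p.1 = s)) ∧ ReflTransGen E s p.2 ∧ ReflTransGen E p.1 t}

theorem exists_succ_mem_cycleCensor {E : V → V → Prop} {s t : V} (hst : ReflTransGen E s t)
    {p : V × V} (hp : p ∈ cycleCensor E s t) : ∃ w, (p.2, w) ∈ cycleCensor E s t := by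
  obtain ⟨v, u⟩ := p
  obtain ⟨hedge, hsu, hvt⟩ := hp
  have hut : ReflTransGen E u t := by
    rcases hedge with h | ⟨rfl, -⟩
    · exact hvt.head h
    · exact .refl
  rcases hsu.cases_tail with rfl | ⟨w, hsw, hwu⟩
  · exact ⟨t, Or.inr ⟨rfl, rfl⟩, hst, hut⟩
  · exact ⟨w, Or.inl hwu, hsw, hut⟩

theorem censor_cycleCensor {E : V → V → Prop} {s t : V} (hst : ReflTransGen E s t) :
    Censor ({p | E p.2 p.1 ∨ (p.2 = t ∧ p.1 = s)} ∪ {(s, s)}) (successorRules V)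
      (cycleCensor E s t) :=
  ⟨fun _ hp => Or.inl hp.1,
    satisfiesSet_successorRules_iff.2 fun _ => exists_succ_mem_cycleCensor hst⟩

theorem mk_mem_cycleCensor {E : V → V → Prop} {s t : V} (hst : ReflTransGen E s t) :
    (s, t) ∈ cycleCensor E s t :=
  ⟨Or.inr ⟨rfl, rfl⟩, hst, hst⟩

end SuccessorRules

/-- correctness of the reduction from st-reachability in a DAG to
IGA-entailment for the linear policy of the paper's Theorem 2. -/
theorem stmt6 {V : Type*} [Fintype V] (E : V → V → Prop)
    (hacyc : ∀ v, ¬ Relation.TransGen E v v) (s t : V) :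
    let E' : V → V → Prop := fun x y => E x y ∨ (x = t ∧ y = s)
    let A : Set (V × V) := {p | E' p.2 p.1} ∪ {(s, s)}
    let R : Set (GroundRule (V × V)) :=
      {r | ∃ v u : V,
        r = ⟨({(v, u)} : Finset (V × V)), {I | ∃ w : V, I = ({(u, w)} : Finset (V × V))}⟩}
    (∃ u, (t, u) ∈ ⋃₀ {C | Censor A R C}) ↔ Relation.ReflTransGen E s t := by
  intro E' A R
  constructor
  · rintro ⟨u, C, ⟨hCA, hCR⟩, htu⟩
    exact reflTransGen_of_mem_of_forall_exists_succ_mem hacyc hCA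
      (satisfiesSet_successorRules_iff.1 hCR) htu
  · intro hst
    obtain ⟨u, hu⟩ := exists_succ_mem_cycleCensor hst (mk_mem_cycleCensor hst)
    exact ⟨u, cycleCensor E s t, censor_cycleCensor hst, hu⟩
end

section
/- Let φ be a 3-CNF formula with m ≥ 1 clauses over a finite type P of propositional variables, let A_φ and R_φ be the ABox and the full ground rule set of the CNF encoding, and suppose the interpretation I : P → Bool satisfies φ. Let A'_I = A_φ \ ({T(p, v) | p ∈ P, v ≠ I p} ∪ {S(i) | 1 ≤ i ≤ m}). Then there is no set C with A'_I ∪ {S(m)} ⊆ C ⊆ A_φ such that C satisfies R_φ; in particular, A'_I ∪ {S(m)} is contained in no censor for A_φ and R_φ. -/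
/-- The atoms of the CNF encoding. -/
inductive Atom (P : Type) : Type where
  | S : ℕ → Atom P
  | N : ℕ → ℕ → Atom P
  | V : Fin 3 → ℕ → P → Atom P
  | Pl : Fin 3 → ℕ → Bool → Atom P
  | T : P → Bool → Atom P
  | U : Atom P
  deriving DecidableEq

/-- `I` satisfies the 3-CNF `φ` (clauses indexed `1..m` via `Fin m`):
every clause has some literal `(p, v)` with `I p = v`. -/
def SatCNF {P : Type} {m : ℕ} (I : P → Bool) (φ : Fin m → Fin 3 → P × Bool) : Prop :=
  ∀ i : Fin m, ∃ j : Fin 3, I (φ i j).1 = (φ i j).2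

/-- The ABox `A_φ` of the CNF encoding (the `i`-th clause, `i : Fin m`,
has index `i.val + 1` in `1..m`). -/
def abox {P : Type} {m : ℕ} (φ : Fin m → Fin 3 → P × Bool) : Set (Atom P) :=
  {a | ∃ i : Fin m, a = Atom.N i.val (i.val + 1)} ∪
  {a | ∃ (i : Fin m) (j : Fin 3), a = Atom.V j (i.val + 1) (φ i j).1} ∪
  {a | ∃ (i : Fin m) (j : Fin 3), a = Atom.Pl j (i.val + 1) (φ i j).2} ∪
  {a | ∃ (p : P) (b : Bool), a = Atom.T p b} ∪
  {a | ∃ i : Fin m, a = Atom.S (i.val + 1)}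

/-- The full ground rule set `R_φ` of the CNF encoding. -/
def rules (P : Type) [DecidableEq P] (m : ℕ) : Set (GroundRule (Atom P)) :=
  {r | ∃ (j : Fin 3) (i : Fin m) (p : P) (v : Bool),
    r = ⟨({Atom.S (i.val + 1), Atom.N i.val (i.val + 1), Atom.V j (i.val + 1) p,
           Atom.Pl j (i.val + 1) v, Atom.T p v} : Finset (Atom P)),
         {({Atom.S i.val} : Finset (Atom P))}⟩} ∪
  {r | ∃ p : P,
    r = ⟨({Atom.T p true, Atom.T p false} : Finset (Atom P)),
         {({Atom.U} : Finset (Atom P))}⟩}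

/-- The candidate censor `A'_I` built from an interpretation `I`:
remove from `A_φ` all `T(p, v)` with `v ≠ I p` and all `S(i)` with `1 ≤ i ≤ m`. -/
def aboxOf {P : Type} {m : ℕ} (φ : Fin m → Fin 3 → P × Bool) (I : P → Bool) :
    Set (Atom P) :=
  abox φ \ ({a | ∃ (p : P) (v : Bool), v ≠ I p ∧ a = Atom.T p v} ∪
            {a | ∃ i : Fin m, a = Atom.S (i.val + 1)})

/-! A satisfying interpretation keeps, for every clause `i`, the atom `T(p, v)` of a true
literal `(p, v)`, so together with the untouched `N`, `V` and `Pl` atoms the body of that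
literal's rule lies in `C` as soon as `S(i + 1)` does. Starting from `S(m)`, these rules
force `S(m - 1), …, S(0)`, and `S(0)` is not in `A_φ`. -/

theorem RuleSat.mem_of_body_subset {α : Type*} {C : Set α} {B : Finset α} {a : α}
    (h : RuleSat C ⟨B, {{a}}⟩) (hB : ↑B ⊆ C) : a ∈ C := by
  obtain ⟨I, rfl, hI⟩ := h hB
  exact hI (Finset.mem_coe.2 (Finset.mem_singleton_self a))

section CNFEncoding

variable {P : Type} {m : ℕ}

theorem Atom.S_zero_notMem_abox (φ : Fin m → Fin 3 → P × Bool) : Atom.S 0 ∉ abox φ := by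
  simp [abox]

theorem mem_aboxOf_of_mem_abox {φ : Fin m → Fin 3 → P × Bool} {I : P → Bool} {a : Atom P}
    (ha : a ∈ abox φ) (hT : ∀ p v, a = Atom.T p v → v = I p)
    (hS : ∀ i : Fin m, a ≠ Atom.S (i.val + 1)) : a ∈ aboxOf φ I := by
  refine ⟨ha, ?_⟩
  rintro (⟨p, v, hv, rfl⟩ | ⟨i, rfl⟩)
  · exact hv (hT p v rfl)
  · exact hS i rfl

theorem Atom.S_mem_of_S_succ_mem [DecidableEq P] {φ : Fin m → Fin 3 → P × Bool}
    {I : P → Bool} {C : Set (Atom P)} (hI : SatCNF I φ) (hA : aboxOf φ I ⊆ C)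
    (hC : SatisfiesSet C (rules P m)) (i : Fin m) (hS : Atom.S (i.val + 1) ∈ C) :
    Atom.S i.val ∈ C := by
  obtain ⟨j, hj⟩ := hI i
  refine (hC _ (Or.inl ⟨j, i, (φ i j).1, (φ i j).2, rfl⟩)).mem_of_body_subset ?_
  have mem_of_kept : ∀ a ∈ abox φ, (∀ p v, a = Atom.T p v → v = I p) →
      (∀ i : Fin m, a ≠ Atom.S (i.val + 1)) → a ∈ C :=
    fun a ha hT hS => hA (mem_aboxOf_of_mem_abox ha hT hS)
  intro a ha
  simp only [Finset.coe_insert, Finset.coe_singleton, Set.mem_insert_iff,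
    Set.mem_singleton_iff] at ha
  rcases ha with rfl | rfl | rfl | rfl | rfl
  · exact hS
  · exact mem_of_kept _ (Or.inl (Or.inl (Or.inl (Or.inl ⟨i, rfl⟩)))) (by simp) (by simp)
  · exact mem_of_kept _ (Or.inl (Or.inl (Or.inl (Or.inr ⟨i, j, rfl⟩)))) (by simp) (by simp)
  · exact mem_of_kept _ (Or.inl (Or.inl (Or.inr ⟨i, j, rfl⟩))) (by simp) (by simp)
  · refine mem_of_kept _ (Or.inl (Or.inr ⟨_, _, rfl⟩)) ?_ (by simp)
    rintro p v ⟨⟩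
    exact hj.symm

end CNFEncoding

theorem stmt10_general {P : Type} [DecidableEq P] {m : ℕ}
    (φ : Fin m → Fin 3 → P × Bool) (I : P → Bool) (hI : SatCNF I φ) :
    ¬ ∃ C : Set (Atom P),
        aboxOf φ I ∪ {Atom.S m} ⊆ C ∧ C ⊆ abox φ ∧ SatisfiesSet C (rules P m) := by
  rintro ⟨C, hsub, hCA, hsat⟩
  have hS0 : Atom.S 0 ∈ C :=
    Nat.decreasingInduction (motive := fun k _ => Atom.S k ∈ C)
      (fun k hk =>
        Atom.S_mem_of_S_succ_mem hI (Set.subset_union_left.trans hsub) hsat ⟨k, hk⟩)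
      (hsub (Or.inr rfl)) (Nat.zero_le m)
  exact Atom.S_zero_notMem_abox φ (hCA hS0)

/-- if `I` satisfies `φ` (with `m ≥ 1`), then no set between
`A'_I ∪ {S(m)}` and `A_φ` satisfies `R_φ`. -/
theorem stmt10 {P : Type} [Fintype P] [DecidableEq P] {m : ℕ} (hm : 1 ≤ m)
    (φ : Fin m → Fin 3 → P × Bool) (I : P → Bool) (hI : SatCNF I φ) :
    ¬ ∃ C : Set (Atom P),
        aboxOf φ I ∪ {Atom.S m} ⊆ C ∧ C ⊆ abox φ ∧ SatisfiesSet C (rules P m) :=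
  stmt10_general φ I hI
end

section
/- Let φ be a 3-CNF formula with m ≥ 1 clauses over a finite type P of propositional variables, and let A_φ and R_φ be the ABox and the full ground rule set of the CNF encoding. Then φ is unsatisfiable (no interpretation I : P → Bool satisfies φ) if and only if S(m) belongs to every optimal censor for A_φ and R_φ (equivalently, S(m) belongs to the intersection of all optimal censors, i.e., S(m) is IGA-entailed by the encoded instance). -/
section Censor

variable {α : Type*} {A : Set α} {R : Set (GroundRule α)} {C : Set α}

theorem ruleSat_iff_of_heads_eq_singleton {r : GroundRule α} {H : Finset α}
    (hr : r.heads = {H}) : RuleSat C r ↔ (↑r.body ⊆ C → ↑H ⊆ C) := by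
  simp [RuleSat, hr]

theorem Censor.not_body_subset {r : GroundRule α} (hC : Censor A R C) (hr : r ∈ R)
    (hheads : ∀ I ∈ r.heads, ¬ ↑I ⊆ A) : ¬ ↑r.body ⊆ C := fun hbody ↦
  let ⟨I, hI, hIC⟩ := hC.2 r hr hbody
  hheads I hI (hIC.trans hC.1)

theorem OptimalCensor.exists_rule_of_not_mem (hC : OptimalCensor A R C) {a : α} (ha : a ∈ A)
    (haC : a ∉ C) :
    ∃ r ∈ R, a ∈ r.body ∧ ↑r.body ⊆ insert a C ∧ ∀ I ∈ r.heads, ¬ ↑I ⊆ insert a C := by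
  have hunsat : ¬ SatisfiesSet (insert a C) R := fun hsat ↦
    haC (hC.2 _ ⟨Set.insert_subset ha hC.1.1, hsat⟩ (Set.subset_insert a C) ▸ Set.mem_insert a C)
  simp only [SatisfiesSet, RuleSat, not_forall, not_exists, not_and] at hunsat
  obtain ⟨r, hr, hbody, hheads⟩ := hunsat
  refine ⟨r, hr, ?_, hbody, hheads⟩
  by_contra har
  obtain ⟨I, hI, hIC⟩ := hC.1.2 r hr fun b hb ↦
    (hbody hb).resolve_left fun hba ↦ har (hba ▸ hb)
  exact hheads I hI (hIC.trans (Set.subset_insert a C))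

end Censor

section Encoding

variable {P : Type} {m : ℕ} {φ : Fin m → Fin 3 → P × Bool}

theorem S_mem_abox_iff {k : ℕ} : Atom.S k ∈ abox φ ↔ ∃ i : Fin m, i.val + 1 = k := by
  simp [abox, eq_comm]

theorem V_mem_abox_iff {j : Fin 3} {k : ℕ} {p : P} :
    Atom.V j k p ∈ abox φ ↔ ∃ i : Fin m, i.val + 1 = k ∧ (φ i j).1 = p := by
  simp [abox, eq_comm]

theorem Pl_mem_abox_iff {j : Fin 3} {k : ℕ} {v : Bool} :
    Atom.Pl j k v ∈ abox φ ↔ ∃ i : Fin m, i.val + 1 = k ∧ (φ i j).2 = v := by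
  simp [abox, eq_comm]

theorem U_not_mem_abox : Atom.U ∉ abox φ := by
  simp [abox]

theorem S_zero_not_mem_abox : Atom.S 0 ∉ abox φ := by
  simp [S_mem_abox_iff]

theorem S_not_mem_aboxOf {I : P → Bool} (k : ℕ) : Atom.S k ∉ aboxOf φ I := by
  rintro ⟨hk, hkS⟩
  obtain ⟨i, rfl⟩ := S_mem_abox_iff.1 hk
  exact hkS (Or.inr ⟨i, rfl⟩)

theorem T_mem_aboxOf_self (I : P → Bool) (p : P) : Atom.T p (I p) ∈ aboxOf φ I :=
  ⟨Or.inl (Or.inr ⟨p, I p, rfl⟩), by rintro (⟨q, v, hv, ⟨⟩⟩ | ⟨i, ⟨⟩⟩); exact hv rfl⟩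

theorem T_not_mem_aboxOf {I : P → Bool} {p : P} {v : Bool} (hv : v ≠ I p) :
    Atom.T p v ∉ aboxOf φ I := fun h ↦
  h.2 (Or.inl ⟨p, v, hv, rfl⟩)

theorem N_mem_aboxOf (I : P → Bool) (i : Fin m) : Atom.N i.val (i.val + 1) ∈ aboxOf φ I :=
  ⟨by simp [abox], by simp⟩

theorem V_mem_aboxOf (I : P → Bool) (i : Fin m) (j : Fin 3) :
    Atom.V j (i.val + 1) (φ i j).1 ∈ aboxOf φ I :=
  ⟨V_mem_abox_iff.2 ⟨i, rfl, rfl⟩, by simp⟩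

theorem Pl_mem_aboxOf (I : P → Bool) (i : Fin m) (j : Fin 3) :
    Atom.Pl j (i.val + 1) (φ i j).2 ∈ aboxOf φ I :=
  ⟨Pl_mem_abox_iff.2 ⟨i, rfl, rfl⟩, by simp⟩

variable [DecidableEq P] {C : Set (Atom P)}

theorem SatisfiesSet.S_mem_of_clause_body (hC : SatisfiesSet C (rules P m)) {i : Fin m}
    {j : Fin 3} {p : P} {v : Bool} (hS : Atom.S (i.val + 1) ∈ C)
    (hN : Atom.N i.val (i.val + 1) ∈ C) (hV : Atom.V j (i.val + 1) p ∈ C)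
    (hPl : Atom.Pl j (i.val + 1) v ∈ C) (hT : Atom.T p v ∈ C) : Atom.S i.val ∈ C := by
  have := (ruleSat_iff_of_heads_eq_singleton rfl).1 (hC _ (Or.inl ⟨j, i, p, v, rfl⟩))
  simp_all [Set.insert_subset_iff]

theorem Censor.eq_of_T_mem (hC : Censor (abox φ) (rules P m) C) {p : P} {v w : Bool}
    (hv : Atom.T p v ∈ C) (hw : Atom.T p w ∈ C) : v = w := by
  by_contra hvw
  apply hC.not_body_subset (Or.inr ⟨p, rfl⟩) (by simp [U_not_mem_abox])
  cases v <;> cases w <;> simp_all [Set.insert_subset_iff]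

open Classical in
theorem Censor.decide_T_true_mem (hC : Censor (abox φ) (rules P m) C) {p : P} {v : Bool}
    (hT : Atom.T p v ∈ C) : decide (Atom.T p true ∈ C) = v := by
  by_cases htrue : Atom.T p true ∈ C
  · simp [htrue, hC.eq_of_T_mem hT htrue]
  · cases v
    · simp [htrue]
    · exact absurd hT htrue

theorem OptimalCensor.S_not_mem_and_exists_T_mem (hC : OptimalCensor (abox φ) (rules P m) C)
    {i : Fin m} (hS : Atom.S (i.val + 1) ∉ C) :
    Atom.S i.val ∉ C ∧ ∃ j : Fin 3, Atom.T (φ i j).1 (φ i j).2 ∈ C := by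
  obtain ⟨r, hr, hSr, hbody, hhead⟩ :=
    hC.exists_rule_of_not_mem (S_mem_abox_iff.2 ⟨i, rfl⟩) hS
  obtain ⟨j, i', p, v, rfl⟩ | ⟨p, rfl⟩ := hr
  · obtain rfl : i' = i := Fin.ext (by simpa [eq_comm] using hSr)
    simp only [Finset.coe_insert, Finset.coe_singleton, Set.insert_subset_iff,
      Set.mem_insert_iff, true_or, reduceCtorEq, false_or, Set.singleton_subset_iff, true_and,
      Set.mem_singleton_iff, forall_eq, Atom.S.injEq, Nat.left_eq_add, one_ne_zero] at hbody hhead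
    obtain ⟨-, hV, hPl, hT⟩ := hbody
    obtain ⟨i₁, hi₁, rfl⟩ := V_mem_abox_iff.1 (hC.1.1 hV)
    obtain ⟨i₂, hi₂, rfl⟩ := Pl_mem_abox_iff.1 (hC.1.1 hPl)
    obtain rfl : i₁ = i' := Fin.ext (by omega)
    obtain rfl : i₂ = i₁ := Fin.ext (by omega)
    exact ⟨hhead, j, hT⟩
  · simp at hSr

theorem OptimalCensor.exists_T_mem_of_S_not_mem (hC : OptimalCensor (abox φ) (rules P m) C)
    {k : ℕ} (hk : k ≤ m) (hS : Atom.S k ∉ C) (i : Fin m) (hik : i.val < k) :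
    ∃ j : Fin 3, Atom.T (φ i j).1 (φ i j).2 ∈ C := by
  induction k with
  | zero => omega
  | succ k ih =>
    obtain ⟨hSk, hclause⟩ := hC.S_not_mem_and_exists_T_mem (i := ⟨k, hk⟩) hS
    rcases Nat.lt_succ_iff_lt_or_eq.1 hik with hik | rfl
    · exact ih (by omega) hSk hik
    · exact hclause

open Classical in
theorem OptimalCensor.satCNF_of_S_not_mem (hC : OptimalCensor (abox φ) (rules P m) C)
    (hS : Atom.S m ∉ C) : SatCNF (fun p ↦ decide (Atom.T p true ∈ C)) φ := fun i ↦
  let ⟨j, hT⟩ := hC.exists_T_mem_of_S_not_mem le_rfl hS i i.isLt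
  ⟨j, hC.1.decide_T_true_mem hT⟩

theorem censor_aboxOf (I : P → Bool) : Censor (abox φ) (rules P m) (aboxOf φ I) := by
  refine ⟨Set.sdiff_subset, ?_⟩
  rintro r (⟨j, i, p, v, rfl⟩ | ⟨p, rfl⟩) hbody
  · exact absurd (hbody (by simp)) (S_not_mem_aboxOf (i.val + 1))
  · exact absurd (hbody (by cases I p <;> simp)) (T_not_mem_aboxOf (Bool.not_ne_self (I p)))

theorem Censor.S_not_mem_of_aboxOf_subset {I : P → Bool} (hI : SatCNF I φ)
    (hC : Censor (abox φ) (rules P m) C) (hsub : aboxOf φ I ⊆ C) (k : ℕ) : Atom.S k ∉ C := by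
  induction k with
  | zero => exact fun h ↦ S_zero_not_mem_abox (hC.1 h)
  | succ k ih =>
    intro hS
    obtain ⟨i, hik⟩ := S_mem_abox_iff.1 (hC.1 hS)
    obtain ⟨j, hj⟩ := hI i
    obtain rfl : i.val = k := by omega
    refine ih (hC.2.S_mem_of_clause_body hS (hsub (N_mem_aboxOf I i))
      (hsub (V_mem_aboxOf I i j)) (hsub (Pl_mem_aboxOf I i j)) (hsub ?_))
    simpa [hj] using T_mem_aboxOf_self (φ := φ) I (φ i j).1

theorem optimalCensor_aboxOf {I : P → Bool} (hI : SatCNF I φ) :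
    OptimalCensor (abox φ) (rules P m) (aboxOf φ I) := by
  refine ⟨censor_aboxOf I, fun C hC hsub ↦ (Set.Subset.antisymm ?_ hsub)⟩
  intro a ha
  refine ⟨hC.1 ha, ?_⟩
  rintro (⟨p, v, hv, rfl⟩ | ⟨i, rfl⟩)
  · exact hv (hC.eq_of_T_mem ha (hsub (T_mem_aboxOf_self I p)))
  · exact hC.S_not_mem_of_aboxOf_subset hI hsub _ ha

end Encoding

theorem stmt11_general {P : Type} [DecidableEq P] {m : ℕ}
    (φ : Fin m → Fin 3 → P × Bool) :
    (¬ ∃ I : P → Bool, SatCNF I φ) ↔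
      ∀ C, OptimalCensor (abox φ) (rules P m) C → Atom.S m ∈ C := by
  constructor
  · intro hunsat C hC
    by_contra hS
    exact hunsat ⟨_, hC.satCNF_of_S_not_mem hS⟩
  · rintro hentails ⟨I, hI⟩
    exact S_not_mem_aboxOf m (hentails _ (optimalCensor_aboxOf hI))

/-- `φ` is unsatisfiable iff `S(m)` belongs to every optimal
censor for `A_φ` and `R_φ` (i.e. `S(m)` is IGA-entailed). -/
theorem stmt11 {P : Type} [Fintype P] [DecidableEq P] {m : ℕ} (hm : 1 ≤ m)
    (φ : Fin m → Fin 3 → P × Bool) :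
    (¬ ∃ I : P → Bool, SatCNF I φ) ↔
      ∀ C, OptimalCensor (abox φ) (rules P m) C → Atom.S m ∈ C :=
  stmt11_general φ
end
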